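/- The Petersen graph is not 3-edge-colorable: there is no assignment of colors {1,2,3} to its 15 edges such that edges sharing a vertex receive distinct colors. -/

import Mathlib

/-!
In a proper 3-edge-colouring of a 5-cycle some colour `k` is used on exactly one edge `{j, j'}`.
If every vertex of the cycle also carries a spoke coloured with its third colour, then the spokes
not coloured `k` are exactly those at `j` and `j'`. In the Petersen graph the five spokes are
shared by the outer pentagon and the inner pentagram, so the two spokes not of the majority
colour would sit at the ends of an edge of the pentagon and of an edge of the pentagram at once,
which is impossible.
-/

/-- The Petersen graph on `Fin 10`: vertices `0–4` form the outer 5-cycle,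
vertices `5–9` the inner pentagram (`5+i` adjacent to `5+((i+2) mod 5)`),
and `i` is adjacent to `i+5` for `i < 5`. -/
def Petersen : SimpleGraph (Fin 10) :=
  SimpleGraph.fromRel (fun u v =>
    (u.val < 5 ∧ v.val < 5 ∧ (u.val + 1) % 5 = v.val) ∨
    (5 ≤ u.val ∧ 5 ≤ v.val ∧ (u.val - 5 + 2) % 5 + 5 = v.val) ∨
    (u.val < 5 ∧ v.val = u.val + 5))

theorem Fin3.eq_iff_ne_and_ne {x y z : Fin 3} (hxy : x ≠ y) (hzx : z ≠ x) (hzy : z ≠ y)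
    (w : Fin 3) : w = z ↔ w ≠ x ∧ w ≠ y := by
  revert x y z w; decide

set_option maxRecDepth 10000 in
theorem Fin5.exists_unique_color_of_cycle {d : Fin 5} (hd : d ≠ 0) {a : Fin 5 → Fin 3}
    (ha : ∀ i, a i ≠ a (i + d)) : ∃ j, ∀ i, a i = a j → i = j := by
  -- each colour class is a matching of the 5-cycle, of size at most 2, and 5 is odd
  revert d a; decide

theorem Fin5.sub_ne_add {d : Fin 5} (hd : d ≠ 0) (i : Fin 5) : i - d ≠ i + d := by
  revert d i; decide

/-- `a i` colours the edge `{i, i + d}` of a 5-cycle and `s i` a spoke at `i`. -/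
theorem Fin5.exists_spoke_color_ne_iff {d : Fin 5} (hd : d ≠ 0) {a s : Fin 5 → Fin 3}
    (ha : ∀ i, a (i - d) ≠ a i) (hs : ∀ i, s i ≠ a (i - d) ∧ s i ≠ a i) :
    ∃ j, ∀ i, s i ≠ a j ↔ i = j ∨ i = j + d := by
  obtain ⟨j, hj⟩ := exists_unique_color_of_cycle hd (a := a) fun i => by
    simpa only [add_sub_cancel_right] using ha (i + d)
  refine ⟨j, fun i => ?_⟩
  have hcolor : a j = s i ↔ a j ≠ a (i - d) ∧ a j ≠ a i :=
    Fin3.eq_iff_ne_and_ne (ha i) (hs i).1 (hs i).2 (a j)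
  have hprev : a j = a (i - d) ↔ i = j + d :=
    ⟨fun h => sub_eq_iff_eq_add.1 (hj _ h.symm), fun h => by rw [h, add_sub_cancel_right]⟩
  have hcur : a j = a i ↔ i = j := ⟨fun h => hj i h.symm, fun h => h ▸ rfl⟩
  rw [ne_comm, ne_eq, hcolor, ne_eq, ne_eq, hprev, hcur]
  tauto

theorem Fin5.pair_add_one_ne_pair_add_two (j j' : Fin 5) :
    ({j, j + 1} : Finset (Fin 5)) ≠ {j', j' + 2} := by
  revert j j'; decide

theorem Fin5.false_of_spoke_colors {s : Fin 5 → Fin 3} {k k' : Fin 3} {j j' : Fin 5}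
    (h : ∀ i, s i ≠ k ↔ i = j ∨ i = j + 1) (h' : ∀ i, s i ≠ k' ↔ i = j' ∨ i = j' + 2) :
    False := by
  obtain ⟨x, hx, hx'⟩ : ∃ x, ¬(x = j ∨ x = j + 1) ∧ ¬(x = j' ∨ x = j' + 2) := by
    clear h h'; revert j j'; decide
  obtain rfl : k = k' := (not_not.1 ((h x).not.2 hx)).symm.trans (not_not.1 ((h' x).not.2 hx'))
  refine pair_add_one_ne_pair_add_two j j' (Finset.ext fun i => ?_)
  simpa only [Finset.mem_insert, Finset.mem_singleton] using (h i).symm.trans (h' i)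

section EdgeColoring

variable {V : Type*} {G : SimpleGraph V} {c : V → V → Fin 3}

theorem exists_spoke_color_ne_iff (hsymm : ∀ u v, c u v = c v u)
    (hc : ∀ u v w, G.Adj u v → G.Adj u w → v ≠ w → c u v ≠ c u w)
    {f g : Fin 5 → V} {d : Fin 5} (hd : d ≠ 0) (hf : Function.Injective f)
    (hfg : ∀ i j, f i ≠ g j) (hcycle : ∀ i, G.Adj (f i) (f (i + d)))
    (hspoke : ∀ i, G.Adj (f i) (g i)) :
    ∃ j, ∀ i, c (f i) (g i) ≠ c (f j) (f (j + d)) ↔ i = j ∨ i = j + d := by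
  have hprev (i : Fin 5) : c (f (i - d)) (f (i - d + d)) = c (f i) (f (i - d)) := by
    rw [sub_add_cancel, hsymm]
  have hadj_prev (i : Fin 5) : G.Adj (f i) (f (i - d)) := by
    simpa only [sub_add_cancel] using (hcycle (i - d)).symm
  refine Fin5.exists_spoke_color_ne_iff hd (a := fun i => c (f i) (f (i + d))) (fun i => ?_)
    fun i => ⟨?_, ?_⟩
  · rw [hprev]
    exact hc _ _ _ (hadj_prev i) (hcycle i) (hf.ne (Fin5.sub_ne_add hd i))
  · rw [hprev]
    exact hc _ _ _ (hspoke i) (hadj_prev i) (hfg _ _).symm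
  · exact hc _ _ _ (hspoke i) (hcycle i) (hfg _ _).symm

end EdgeColoring

namespace Petersen

def outerVertex (i : Fin 5) : Fin 10 := Fin.castAdd 5 i

def innerVertex (i : Fin 5) : Fin 10 := Fin.natAdd 5 i

theorem outerVertex_injective : Function.Injective outerVertex := Fin.castAdd_injective 5 5

theorem innerVertex_injective : Function.Injective innerVertex := Fin.natAdd_injective 5 5

theorem outerVertex_ne_innerVertex (i j : Fin 5) : outerVertex i ≠ innerVertex j := by
  revert i j; decide

theorem adj_outerVertex (i : Fin 5) : Petersen.Adj (outerVertex i) (outerVertex (i + 1)) := by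
  rw [Petersen, SimpleGraph.fromRel_adj]; revert i; decide

theorem adj_innerVertex (i : Fin 5) : Petersen.Adj (innerVertex i) (innerVertex (i + 2)) := by
  rw [Petersen, SimpleGraph.fromRel_adj]; revert i; decide

theorem adj_outerVertex_innerVertex (i : Fin 5) :
    Petersen.Adj (outerVertex i) (innerVertex i) := by
  rw [Petersen, SimpleGraph.fromRel_adj]; revert i; decide

end Petersen

/-- The Petersen graph is not 3-edge-colorable: there is no symmetric assignment
of colors `{1,2,3}` to its edges such that edges sharing a vertex receive
distinct colors. -/
theorem stmt15 :
    ¬ ∃ c : Fin 10 → Fin 10 → Fin 3,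
      (∀ u v, c u v = c v u) ∧
      ∀ u v w, Petersen.Adj u v → Petersen.Adj u w → v ≠ w → c u v ≠ c u w := by
  rintro ⟨c, hsymm, hc⟩
  obtain ⟨j, hj⟩ := exists_spoke_color_ne_iff hsymm hc one_ne_zero
    Petersen.outerVertex_injective Petersen.outerVertex_ne_innerVertex
    Petersen.adj_outerVertex Petersen.adj_outerVertex_innerVertex
  obtain ⟨j', hj'⟩ := exists_spoke_color_ne_iff hsymm hc (by decide)
    Petersen.innerVertex_injective (fun i j => (Petersen.outerVertex_ne_innerVertex j i).symm)
    Petersen.adj_innerVertex fun i => (Petersen.adj_outerVertex_innerVertex i).symm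
  exact Fin5.false_of_spoke_colors hj fun i => by rw [hsymm]; exact hj' i
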